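/- In a triangle inscribed in a circle of circumradius 1 with angles α at A, β at B, γ at C, if T is a point on the reflection of the circumcircle across AB, parametrized by t, and AA₁ is the cevian through T, then AA₁² = 4 sin²β sin²γ / cos²((t + α − β)/2), and similarly BB₁² = 4 sin²α sin²γ / cos²((t + α − β)/2); consequently AA₁ = BB₁ implies sin α = sin β. -/

import Mathlib

open EuclideanGeometry Real

noncomputable section

/-- The Euclidean plane. -/
abbrev Pt : Type := EuclideanSpace ℝ (Fin 2)

/-- The point of the Euclidean plane with the given coordinates. -/
def pt (x y : ℝ) : Pt := WithLp.toLp 2 ![x, y]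

/-!
With `s, d = (t ± (α + β)) / 2` one has `T - A = 2 cos d • (sin s, cos s)` and
`T - B = 2 cos s • (sin d, cos d)`, so each cevian runs along a unit vector `u`. Going from
`P` along `u` to a line with normal `n`, the distance covered is `|⟪Q - P, n⟫| / |⟪u, n⟫|` for
any point `Q` of the line. For the normals `(sin β, cos β)` of `BC` and `(-sin α, cos α)` of `AC`
both denominators equal `|cos ((t + α - β) / 2)|`, and the numerators are `2 sin β sin γ` and
`2 sin α sin γ`.
-/

section

variable {V P : Type*} [NormedAddCommGroup V] [InnerProductSpace ℝ V] [MetricSpace P]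
  [NormedAddTorsor V P]

theorem inner_vsub_eq_of_mem_affineSpan_pair {x p q o : P} {n : V}
    (hx : x ∈ line[ℝ, p, q]) (hn : inner ℝ (q -ᵥ p) n = 0) :
    inner ℝ (x -ᵥ o) n = inner ℝ (p -ᵥ o) n := by
  obtain ⟨r, rfl⟩ := mem_affineSpan_pair_iff_exists_lineMap_eq.1 hx
  rw [← vsub_add_vsub_cancel _ p, inner_add_left, AffineMap.lineMap_vsub_left,
    inner_smul_left, hn, mul_zero, zero_add]

theorem dist_mul_abs_inner_eq_of_mem_affineSpan_pair {p q x : P} {u n : V} {a : ℝ}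
    (hu : ‖u‖ = 1) (hq : q -ᵥ p = a • u) (hx : x ∈ line[ℝ, p, q]) :
    dist p x * |inner ℝ u n| = |inner ℝ (x -ᵥ p) n| := by
  obtain ⟨r, rfl⟩ := mem_affineSpan_pair_iff_exists_lineMap_eq.1 hx
  rw [dist_comm, dist_eq_norm_vsub V, AffineMap.lineMap_vsub_left, hq, smul_smul, norm_smul,
    hu, mul_one, inner_smul_left, abs_mul, Real.norm_eq_abs, conj_trivial]

end

theorem sq_eq_div_sq_of_mul_abs_eq {x c k : ℝ} (h : x * |c| = k) (hk : k ≠ 0) :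
    x ^ 2 = k ^ 2 / c ^ 2 := by
  have hc : c ≠ 0 := by rintro rfl; simp_all
  rw [eq_div_iff (pow_ne_zero 2 hc), ← h, mul_pow, sq_abs]

theorem pt_sub_pt (a b c d : ℝ) : pt a b - pt c d = pt (a - c) (b - d) := by
  simp [pt, ← WithLp.toLp_sub]

theorem smul_pt (r a b : ℝ) : r • pt a b = pt (r * a) (r * b) := by
  simp [pt, ← WithLp.toLp_smul]

theorem inner_pt (a b c d : ℝ) : inner ℝ (pt a b) (pt c d) = a * c + b * d := by
  simp [pt, PiLp.inner_apply, Fin.sum_univ_two, mul_comm]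

theorem norm_pt_sin_cos (x : ℝ) : ‖pt (sin x) (cos x)‖ = 1 := by
  simp [EuclideanSpace.norm_eq, pt, Fin.sum_univ_two]

theorem inner_pt_sin_cos (x y : ℝ) :
    inner ℝ (pt (sin x) (cos x)) (pt (sin y) (cos y)) = cos (x - y) := by
  rw [inner_pt, cos_sub]; ring

section Configuration

variable (α β t : ℝ)

def vertexA : Pt := pt (-2 * sin β * cos α) 0

def vertexB : Pt := pt (2 * sin α * cos β) 0

def vertexC : Pt := pt 0 (2 * sin α * sin β)

-- `-cos γ` is written as `cos (α + β)`.
def reflectedCirclePoint : Pt :=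
  pt (sin t + (-2 * sin β * cos α + 2 * sin α * cos β) / 2) (cos t + cos (α + β))

theorem reflectedCirclePoint_vsub_vertexA :
    reflectedCirclePoint α β t -ᵥ vertexA α β =
      (2 * cos ((t - (α + β)) / 2)) •
        pt (sin ((t + (α + β)) / 2)) (cos ((t + (α + β)) / 2)) := by
  rw [reflectedCirclePoint, vertexA, vsub_eq_sub, pt_sub_pt, smul_pt]
  congr 1
  · linear_combination sin_add_sin t (α + β) - sin_add α β
  · linear_combination cos_add_cos t (α + β)

theorem reflectedCirclePoint_vsub_vertexB :
    reflectedCirclePoint α β t -ᵥ vertexB α β =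
      (2 * cos ((t + (α + β)) / 2)) •
        pt (sin ((t - (α + β)) / 2)) (cos ((t - (α + β)) / 2)) := by
  rw [reflectedCirclePoint, vertexB, vsub_eq_sub, pt_sub_pt, smul_pt]
  congr 1
  · linear_combination sin_sub_sin t (α + β) + sin_add α β
  · linear_combination cos_add_cos t (α + β)

theorem inner_vertexC_vsub_vertexB :
    inner ℝ (vertexC α β -ᵥ vertexB α β) (pt (sin β) (cos β)) = 0 := by
  rw [vertexC, vertexB, vsub_eq_sub, pt_sub_pt, inner_pt]; ring

theorem inner_vertexB_vsub_vertexA :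
    inner ℝ (vertexB α β -ᵥ vertexA α β) (pt (sin β) (cos β)) =
      2 * sin β * sin (α + β) := by
  rw [vertexB, vertexA, vsub_eq_sub, pt_sub_pt, inner_pt, sin_add]; ring

theorem inner_vertexC_vsub_vertexA :
    inner ℝ (vertexC α β -ᵥ vertexA α β) (pt (sin (-α)) (cos (-α))) = 0 := by
  rw [vertexC, vertexA, vsub_eq_sub, pt_sub_pt, inner_pt, sin_neg, cos_neg]; ring

theorem inner_vertexA_vsub_vertexB :
    inner ℝ (vertexA α β -ᵥ vertexB α β) (pt (sin (-α)) (cos (-α))) =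
      2 * sin α * sin (α + β) := by
  rw [vertexA, vertexB, vsub_eq_sub, pt_sub_pt, inner_pt, sin_neg, sin_add]; ring

theorem dist_vertexA_mul_abs_cos {A₁ : Pt}
    (h₁ : A₁ ∈ line[ℝ, vertexA α β, reflectedCirclePoint α β t])
    (h₂ : A₁ ∈ line[ℝ, vertexB α β, vertexC α β]) :
    dist (vertexA α β) A₁ * |cos ((t + α - β) / 2)| = |2 * sin β * sin (α + β)| := by
  rw [← inner_vertexB_vsub_vertexA,
    ← inner_vsub_eq_of_mem_affineSpan_pair h₂ (inner_vertexC_vsub_vertexB α β),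
    ← dist_mul_abs_inner_eq_of_mem_affineSpan_pair (norm_pt_sin_cos _)
      (reflectedCirclePoint_vsub_vertexA α β t) h₁, inner_pt_sin_cos]
  congr 3; ring

theorem dist_vertexB_mul_abs_cos {B₁ : Pt}
    (h₁ : B₁ ∈ line[ℝ, vertexB α β, reflectedCirclePoint α β t])
    (h₂ : B₁ ∈ line[ℝ, vertexA α β, vertexC α β]) :
    dist (vertexB α β) B₁ * |cos ((t + α - β) / 2)| = |2 * sin α * sin (α + β)| := by
  rw [← inner_vertexA_vsub_vertexB,
    ← inner_vsub_eq_of_mem_affineSpan_pair h₂ (inner_vertexC_vsub_vertexA α β),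
    ← dist_mul_abs_inner_eq_of_mem_affineSpan_pair (norm_pt_sin_cos _)
      (reflectedCirclePoint_vsub_vertexB α β t) h₁, inner_pt_sin_cos]
  congr 3; ring

end Configuration

theorem cevian_length_on_reflected_circle (α β γ t : ℝ)
    (hα : 0 < α) (hβ : 0 < β) (hγ : 0 < γ) (hsum : α + β + γ = π)
    (A B C T A₁ B₁ : Pt)
    (hA : A = pt (-2 * sin β * cos α) 0)
    (hB : B = pt (2 * sin α * cos β) 0)
    (hC : C = pt 0 (2 * sin α * sin β))
    (hT : T = pt (sin t + (-2 * sin β * cos α + 2 * sin α * cos β) / 2)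
      (cos t - cos γ))
    (hA₁ : A₁ ∈ affineSpan ℝ ({A, T} : Set Pt))
    (hA₁' : A₁ ∈ affineSpan ℝ ({B, C} : Set Pt))
    (hB₁ : B₁ ∈ affineSpan ℝ ({B, T} : Set Pt))
    (hB₁' : B₁ ∈ affineSpan ℝ ({A, C} : Set Pt)) :
    dist A A₁ ^ 2 = 4 * sin β ^ 2 * sin γ ^ 2 / cos ((t + α - β) / 2) ^ 2 ∧
    dist B B₁ ^ 2 = 4 * sin α ^ 2 * sin γ ^ 2 / cos ((t + α - β) / 2) ^ 2 ∧
    (dist A A₁ = dist B B₁ → sin α = sin β) := by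
  obtain rfl : γ = π - (α + β) := by linarith
  have hsα : 0 < sin α := sin_pos_of_pos_of_lt_pi hα (by linarith)
  have hsβ : 0 < sin β := sin_pos_of_pos_of_lt_pi hβ (by linarith)
  have hsγ : 0 < sin (α + β) := sin_pos_of_pos_of_lt_pi (by linarith) (by linarith)
  rw [sin_pi_sub]
  obtain rfl : A = vertexA α β := hA
  obtain rfl : B = vertexB α β := hB
  obtain rfl : C = vertexC α β := hC
  obtain rfl : T = reflectedCirclePoint α β t := by rw [hT, cos_pi_sub, sub_neg_eq_add]; rfl
  have hAA₁ := dist_vertexA_mul_abs_cos α β t hA₁ hA₁'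
  have hBB₁ := dist_vertexB_mul_abs_cos α β t hB₁ hB₁'
  rw [abs_of_pos (by positivity : 0 < 2 * sin β * sin (α + β))] at hAA₁
  rw [abs_of_pos (by positivity : 0 < 2 * sin α * sin (α + β))] at hBB₁
  refine ⟨?_, ?_, fun h => ?_⟩
  · rw [sq_eq_div_sq_of_mul_abs_eq hAA₁ (by positivity)]; ring
  · rw [sq_eq_div_sq_of_mul_abs_eq hBB₁ (by positivity)]; ring
  · rw [h, hBB₁] at hAA₁
    linarith [mul_right_cancel₀ hsγ.ne' hAA₁]
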